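/- Let M be a matroid on a finite ground set E and let B₁, …, Bₙ be a pinned broken line shelling of the bases of M. Then for every index i, the restriction set R(B_i) contains B_i \ B₁; equivalently, for every element e ∉ B₁ one has e ∈ R(B_i) if and only if e ∈ B_i, i.e., R(B_i) \ B₁ = B_i \ B₁. (Lemma 6.7 (lem:coveredAtoms), second part: the atoms below a basis B in the restriction set poset correspond exactly to the elements of B \ B₁.) -/

import Mathlib

/-!
Let `e ∈ Bᵢ \ B₁`. Symmetric basis exchange yields `f ∈ B₁ \ Bᵢ` such that both
`Bᵢ - e + f` and `B₁ - f + e` are bases. Since `ℓᵢ` is uniquely minimised at `B₁`, the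
second exchange gives `ℓᵢ(f) < ℓᵢ(e)`, so `Bᵢ - e + f` is lighter than `Bᵢ` and hence comes
earlier in the shelling. As `Bᵢ \ {e} ⊆ Bᵢ - e + f`, this puts `e` in `R(Bᵢ)`.
-/

open scoped BigOperators

/-- The `ℓ`-weight of a set `A ⊆ E`. -/
noncomputable def wt {α : Type*} (ℓ : α → ℝ) (A : Set α) : ℝ := ∑ᶠ e ∈ A, ℓ e

/-- `ℓ` is generic for `M`. -/
def Generic {α : Type*} (M : Matroid α) (ℓ : α → ℝ) : Prop :=
  Function.Injective ℓ ∧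
    ∀ ⦃B B' : Set α⦄, M.IsBase B → M.IsBase B' → B ≠ B' → wt ℓ B ≠ wt ℓ B'

/-- `B` enumerates (without repetition) all the bases of `M`. -/
def EnumeratesBases {α : Type*} (M : Matroid α) {n : ℕ} (B : Fin n → Set α) : Prop :=
  Function.Injective B ∧ (∀ i, M.IsBase (B i)) ∧ ∀ C, M.IsBase C → ∃ i, B i = C

/-- The restriction set of the facet `F j` in the enumeration `F`. -/
def restrictionSet {α : Type*} {n : ℕ} (F : Fin n → Set α) (j : Fin n) : Set α :=
  {x | x ∈ F j ∧ ∃ i : Fin n, i < j ∧ F j \ {x} ⊆ F i}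

open Set

lemma wt_insert_sdiff_singleton {α : Type*} (ℓ : α → ℝ) {A : Set α} {e f : α}
    (hA : A.Finite) (he : e ∈ A) (hf : f ∉ A) :
    wt ℓ (insert f A \ {e}) = wt ℓ A + ℓ f - ℓ e := by
  unfold wt
  rw [← insert_sdiff_singleton_comm (ne_of_mem_of_not_mem he hf).symm,
    finsum_mem_insert ℓ (fun h => hf h.1) hA.sdiff]
  conv_rhs => rw [← insert_sdiff_self_of_mem he, finsum_mem_insert ℓ (by simp) hA.sdiff]
  ring

namespace Matroid

variable {α : Type*} {M : Matroid α} {A B : Set α} {e : α}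

lemma IsBase.strong_exchange (hA : M.IsBase A) (hB : M.IsBase B) (he : e ∈ A \ B) :
    ∃ f ∈ B \ A, M.IsBase (insert f A \ {e}) ∧ M.IsBase (insert e B \ {f}) := by
  -- The fundamental circuit of `e` in `B` and the fundamental cocircuit of `e` in `A` share `e`,
  -- so they share a second element `f`; it can be exchanged for `e` in both bases.
  have hC := hB.fundCircuit_isCircuit (hA.subset_ground he.1) he.2
  obtain ⟨f, ⟨hfC, hfK⟩, hfe⟩ := (hC.isCocircuit_inter_nontrivial
    (fundCocircuit_isCocircuit he.1 hA) ⟨e, mem_fundCircuit .., mem_fundCocircuit ..⟩).exists_ne e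
  have hfB : f ∈ B := (mem_insert_iff.1 (M.fundCircuit_subset_insert e B hfC)).resolve_left hfe
  have hfA : f ∉ A :=
    ((mem_insert_iff.1 (M.fundCocircuit_subset_insert_compl e A hfK)).resolve_left hfe).2
  refine ⟨f, ⟨hfB, hfA⟩, hA.exchange_isBase_of_indep' he.1 hfA ?_,
    hB.exchange_isBase_of_indep' hfB he.2 ?_⟩
  · rwa [hA.mem_fundCocircuit_iff_mem_fundCircuit, hA.indep.mem_fundCircuit_iff
      (by rw [hA.closure_eq]; exact hC.subset_ground hfC) hfA] at hfK
  · rwa [hB.indep.mem_fundCircuit_iff (by rw [hB.closure_eq]; exact hA.subset_ground he.1) he.2]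
      at hfC

lemma IsBase.exists_exchange_wt_lt [M.RankFinite] {ℓ : α → ℝ} (hA : M.IsBase A)
    (hB : M.IsBase B) (hmin : ∀ C, M.IsBase C → C ≠ B → wt ℓ B < wt ℓ C) (he : e ∈ A \ B) :
    ∃ f, M.IsBase (insert f A \ {e}) ∧ wt ℓ (insert f A \ {e}) < wt ℓ A := by
  obtain ⟨f, hf, hA', hB'⟩ := hA.strong_exchange hB he
  have hef : e ≠ f := (ne_of_mem_of_not_mem hf.1 he.2).symm
  have hB'lt := hmin _ hB' fun h => he.2 (h ▸ ⟨mem_insert e B, hef⟩)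
  rw [wt_insert_sdiff_singleton ℓ hB.finite hf.1 he.2] at hB'lt
  refine ⟨f, hA', ?_⟩
  rw [wt_insert_sdiff_singleton ℓ hA.finite he.1 hf.2]
  linarith

end Matroid

theorem pinned_broken_line_restriction_contains_diff_general {α : Type*} [Fintype α]
    (M : Matroid α)
    {n : ℕ} (hn : 0 < n) (B : Fin n → Set α) (hB : EnumeratesBases M B)
    (ℓ : Fin n → α → ℝ)
    (hwit : ∀ i j : Fin n, wt (ℓ i) (B j) < wt (ℓ i) (B i) ↔ j < i)
    (hpin : ∀ i : Fin n, ∀ C : Set α, M.IsBase C → C ≠ B ⟨0, hn⟩ →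
      wt (ℓ i) (B ⟨0, hn⟩) < wt (ℓ i) C) :
    ∀ i : Fin n, B i \ B ⟨0, hn⟩ ⊆ restrictionSet B i ∧
      restrictionSet B i \ B ⟨0, hn⟩ = B i \ B ⟨0, hn⟩ := by
  intro i
  have hsub : B i \ B ⟨0, hn⟩ ⊆ restrictionSet B i := by
    intro e he
    obtain ⟨f, hbase, hlt⟩ := (hB.2.1 i).exists_exchange_wt_lt (hB.2.1 _) (hpin i) he
    obtain ⟨j, hj⟩ := hB.2.2 _ hbase
    exact ⟨he.1, j, (hwit i j).1 (hj ▸ hlt), hj ▸ sdiff_subset_sdiff_left (subset_insert f _)⟩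
  exact ⟨hsub, (sdiff_subset_sdiff_left fun _ hx => hx.1).antisymm fun _ hx => ⟨hsub hx, hx.2⟩⟩

theorem pinned_broken_line_restriction_contains_diff {α : Type*} [Fintype α]
    (M : Matroid α) (hE : M.E = Set.univ)
    {n : ℕ} (hn : 0 < n) (B : Fin n → Set α) (hB : EnumeratesBases M B)
    (ℓ : Fin n → α → ℝ) (hgen : ∀ i, Generic M (ℓ i))
    (hwit : ∀ i j : Fin n, wt (ℓ i) (B j) < wt (ℓ i) (B i) ↔ j < i)
    (hpin : ∀ i : Fin n, ∀ C : Set α, M.IsBase C → C ≠ B ⟨0, hn⟩ →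
      wt (ℓ i) (B ⟨0, hn⟩) < wt (ℓ i) C) :
    ∀ i : Fin n, B i \ B ⟨0, hn⟩ ⊆ restrictionSet B i ∧
      restrictionSet B i \ B ⟨0, hn⟩ = B i \ B ⟨0, hn⟩ :=
  pinned_broken_line_restriction_contains_diff_general M hn B hB ℓ hwit hpin
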